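/- Let n ≥ 2 and let a ∈ ℂ^{2^n} be a unit vector, i.e., Σ_{i=0}^{2^n−1} |a_i|² = 1. Then the quadratic form c₂ = Σ_{j,k=0}^{2^n−1} conj(a_j)·M_{jk}·a_k is a real number and satisfies η_min(n) ≤ c₂ ≤ η_max(n). -/

import Mathlib

/-- Hamming weight: number of 1's in the `n`-bit binary representation of `i`. -/
def hamW (n i : ℕ) : ℕ := ((Finset.range n).filter (fun p => i.testBit p)).card

/-- Hamming distance between the `n`-bit binary representations of `i` and `j`. -/
def hamD (n i j : ℕ) : ℕ :=
  ((Finset.range n).filter (fun p => i.testBit p ≠ j.testBit p)).card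

/-- The matrix `M`. -/
noncomputable def Mmat (n : ℕ) : Matrix (Fin (2 ^ n)) (Fin (2 ^ n)) ℝ := fun i j =>
  if i = j then
    ((n : ℝ) - 1) * (1 - 1 / Real.sqrt 2) +
      (1 / n) * ((n : ℝ) - (2 * (hamW n i : ℝ) - (n : ℝ)) ^ 2) * (1 - 1 / Real.sqrt 2) ^ 2
  else
    (2 / n) * (1 - 1 / Real.sqrt 2) ^ 2 *
      ((if hamD n i j = 1 then (n : ℝ) - 1 - 2 * (min (hamW n i) (hamW n j) : ℝ) else 0)
        - (if hamD n i j = 2 then 1 else 0))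

/-- `η_max(n)`. -/
noncomputable def etaMax (n : ℕ) : ℝ :=
  if Even n then
    (1 - 1 / Real.sqrt 2) ^ 2 * (((n : ℝ) - 1) * Real.sqrt 2 + 2 * (n : ℝ))
  else
    (1 - 1 / Real.sqrt 2) ^ 2 * (((n : ℝ) - 1) * Real.sqrt 2 + 2 * (n : ℝ) - 2 / (n : ℝ))

/-- `η_min(n)`. -/
noncomputable def etaMin (n : ℕ) : ℝ :=
  (1 - 1 / Real.sqrt 2) ^ 2 * Real.sqrt 2 * ((n : ℝ) - 1)

/-!
Let `D = ∑ᵢ (Xᵢ - Zᵢ)`, where `Xᵢ` flips bit `i` and `Zᵢ` multiplies by `(-1)^(bit i)`. Counting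
common neighbours in the hypercube gives `D²` entrywise, and comparing entries shows
`M = α - β D²` with `c = 1 - 1/√2`, `α = (n - 1) c + 2 c²` and `β = c² / n`.
The `2 × 2` matrix `X - Z` has eigenvalues `±√2`, with eigenbasis the rotation by `3π/8`; since the
`Xᵢ - Zᵢ` act on different bits, the `n`-fold Kronecker power of that rotation is an orthogonal
eigenbasis of `D` with eigenvalues `√2 (n - 2 W(z))`. Hence `M` has the eigenvalues
`α - 2β (n - 2w)²`, `0 ≤ w ≤ n`, and the quadratic form of a unit vector is real and lies between the
extreme ones: `η_min = α - 2β n²`, and `η_max` is `α` for even `n` and `α - 2β` for odd `n`, where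
`n - 2w` is odd.
-/

open Finset Matrix Real

section QuadForm

variable {ι κ : Type*} [Fintype ι] [Fintype κ] [DecidableEq κ]

theorem quadForm_eq_of_eq_mul_diagonal_mul_transpose {M : Matrix ι ι ℝ}
    {U : Matrix ι κ ℝ} {ν : κ → ℝ} (hM : M = U * diagonal ν * Uᵀ) (a : ι → ℂ) :
    ∑ i, ∑ j, starRingEnd ℂ (a i) * (M i j : ℂ) * a j =
      ((∑ k, ν k * ‖∑ i, (U i k : ℂ) * a i‖ ^ 2 : ℝ) : ℂ) := by
  simp only [hM, mul_apply (M := U * diagonal ν), mul_diagonal, transpose_apply]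
  push_cast
  simp_rw [← Complex.conj_mul', map_sum, map_mul, Complex.conj_ofReal]
  simp only [Finset.sum_mul, Finset.mul_sum]
  rw [sum_comm_cycle]
  refine sum_congr rfl fun k _ => ?_
  rw [sum_comm]
  refine sum_congr rfl fun i _ => sum_congr rfl fun j _ => ?_
  ring

theorem sum_norm_sq_transpose_mulVec_of_mul_transpose_eq_one [DecidableEq ι] {U : Matrix ι κ ℝ}
    (hU : U * Uᵀ = 1) (a : ι → ℂ) : ∑ k, ‖∑ i, (U i k : ℂ) * a i‖ ^ 2 = ∑ i, ‖a i‖ ^ 2 := by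
  have h := quadForm_eq_of_eq_mul_diagonal_mul_transpose (M := 1) (U := U)
    (ν := fun _ => 1) (by rw [diagonal_one, Matrix.mul_one, hU]) a
  simp only [one_apply, one_mul, apply_ite, Complex.ofReal_one, Complex.ofReal_zero, mul_one,
    mul_zero, ite_mul, zero_mul, sum_ite_eq, mem_univ, if_true, Complex.conj_mul'] at h
  exact_mod_cast h.symm

theorem quadForm_bounds_of_eq_mul_diagonal_mul_transpose [DecidableEq ι] {M : Matrix ι ι ℝ}
    {U : Matrix ι κ ℝ} {ν : κ → ℝ} (hU : U * Uᵀ = 1) (hM : M = U * diagonal ν * Uᵀ)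
    {lo hi : ℝ} (hlo : ∀ k, lo ≤ ν k) (hhi : ∀ k, ν k ≤ hi) (a : ι → ℂ)
    (ha : ∑ i, ‖a i‖ ^ 2 = 1) :
    (∑ i, ∑ j, starRingEnd ℂ (a i) * (M i j : ℂ) * a j).im = 0 ∧
    lo ≤ (∑ i, ∑ j, starRingEnd ℂ (a i) * (M i j : ℂ) * a j).re ∧
    (∑ i, ∑ j, starRingEnd ℂ (a i) * (M i j : ℂ) * a j).re ≤ hi := by
  have hb := sum_norm_sq_transpose_mulVec_of_mul_transpose_eq_one hU a
  rw [ha] at hb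
  rw [quadForm_eq_of_eq_mul_diagonal_mul_transpose hM, Complex.ofReal_im,
    Complex.ofReal_re]
  refine ⟨rfl, ?_, ?_⟩
  · calc lo = ∑ k, lo * ‖∑ i, (U i k : ℂ) * a i‖ ^ 2 := by rw [← Finset.mul_sum, hb, mul_one]
      _ ≤ _ := sum_le_sum fun k _ => mul_le_mul_of_nonneg_right (hlo k) (by positivity)
  · calc _ ≤ ∑ k, hi * ‖∑ i, (U i k : ℂ) * a i‖ ^ 2 :=
          sum_le_sum fun k _ => mul_le_mul_of_nonneg_right (hhi k) (by positivity)
      _ = hi := by rw [← Finset.mul_sum, hb, mul_one]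

theorem smul_one_sub_smul_mul_self_eq_of_mul_eq_mul_diagonal {D U : Matrix κ κ ℝ} {μ : κ → ℝ}
    (hU : U * Uᵀ = 1) (hDU : D * U = U * diagonal μ) (α β : ℝ) :
    α • 1 - β • (D * D) = U * diagonal (fun k => α - β * μ k ^ 2) * Uᵀ := by
  have hD : D = U * diagonal μ * Uᵀ := by rw [← hDU, Matrix.mul_assoc, hU, Matrix.mul_one]
  have hUtU : Uᵀ * U = 1 := mul_eq_one_comm.mp hU
  have hdiag : diagonal (fun k => α - β * μ k ^ 2) = α • 1 - β • (diagonal μ * diagonal μ) := by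
    ext k l; by_cases h : k = l <;> simp [h, sq]
  rw [hdiag, hD]
  simp only [Matrix.mul_sub, Matrix.sub_mul, Matrix.mul_smul, Matrix.smul_mul, Matrix.mul_one,
    Matrix.mul_assoc, hU]
  rw [← Matrix.mul_assoc Uᵀ, hUtU, Matrix.one_mul]

end QuadForm

section KroneckerPow

variable {ι β R : Type*} [Fintype ι] [CommSemiring R]

def kroneckerPow (u : Matrix β β R) : Matrix (ι → β) (ι → β) R :=
  of fun x z => ∏ i, u (x i) (z i)

theorem kroneckerPow_transpose (u : Matrix β β R) :
    (kroneckerPow u : Matrix (ι → β) (ι → β) R)ᵀ = kroneckerPow uᵀ :=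
  rfl

theorem kroneckerPow_mul [DecidableEq ι] [Fintype β] (u v : Matrix β β R) :
    (kroneckerPow u * kroneckerPow v : Matrix (ι → β) (ι → β) R) = kroneckerPow (u * v) := by
  ext x z
  simp only [kroneckerPow, mul_apply, of_apply, ← prod_mul_distrib, Fintype.prod_sum]

theorem kroneckerPow_one [DecidableEq β] :
    (kroneckerPow (1 : Matrix β β R) : Matrix (ι → β) (ι → β) R) = 1 := by
  ext x z
  simp only [kroneckerPow, of_apply, one_apply, prod_boole, mem_univ, true_implies, funext_iff]

theorem kroneckerPow_update_apply [DecidableEq ι] (u : Matrix β β R) (x z : ι → β) (i : ι)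
    (b : β) :
    kroneckerPow u (Function.update x i b) z = u b (z i) * ∏ j ∈ univ.erase i, u (x j) (z j) := by
  rw [kroneckerPow, of_apply, ← mul_prod_erase _ _ (mem_univ i), Function.update_self]
  congr 1
  exact prod_congr rfl fun j hj => by rw [Function.update_of_ne (ne_of_mem_erase hj)]

end KroneckerPow

namespace Hypercube

def zSign (b : Bool) : ℝ := if b then -1 else 1

/-- The columns are eigenvectors of `X - Z = !![-1, 1; 1, 1]`, for the eigenvalues `± √2`. -/
noncomputable def rot : Matrix Bool Bool ℝ := of fun
  | false, false => cos (3 * π / 8)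
  | true, true => -cos (3 * π / 8)
  | _, _ => sin (3 * π / 8)

theorem sin_sub_cos_three_pi_div_eight :
    sin (3 * π / 8) - cos (3 * π / 8) = √2 * cos (3 * π / 8) := by
  have h : sin (3 * π / 8 - π / 4) = cos (3 * π / 8) := by
    rw [← sin_pi_div_two_sub]; ring_nf
  rw [sin_sub, sin_pi_div_four, cos_pi_div_four] at h
  linear_combination √2 * h - (sin (3 * π / 8) - cos (3 * π / 8)) / 2 * sq_sqrt zero_le_two

theorem rot_transpose : rotᵀ = rot := by
  ext b c; cases b <;> cases c <;> rfl

theorem rot_mul_self : rot * rot = 1 := by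
  ext b c
  cases b <;> cases c <;> simp [rot, mul_apply] <;> nlinarith [sin_sq_add_cos_sq (3 * π / 8)]

theorem rot_not_sub_zSign_mul (b c : Bool) :
    rot (!b) c - zSign b * rot b c = √2 * zSign c * rot b c := by
  have h := sin_sub_cos_three_pi_div_eight
  have h' : cos (3 * π / 8) + sin (3 * π / 8) = √2 * sin (3 * π / 8) := by
    linear_combination (1 - √2) * h - cos (3 * π / 8) * sq_sqrt (zero_le_two (α := ℝ))
  cases b <;> cases c <;> simp only [rot, zSign, of_apply, Bool.not_false, Bool.not_true] <;>
    norm_num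
  exacts [h, by linear_combination -h', h', h]

variable {ι : Type*}

section Flip

variable [DecidableEq ι]

def flipAt (x : ι → Bool) (i : ι) : ι → Bool := Function.update x i (!x i)

theorem flipAt_injective (x : ι → Bool) : Function.Injective (flipAt x) := by
  intro i j hij
  by_contra hne
  have := congrFun hij i
  simp [flipAt, Function.update_of_ne hne] at this

end Flip

variable [Fintype ι]

def weight (x : ι → Bool) : ℕ := #{i | x i}

def spin (x : ι → Bool) : ℝ := ∑ i, zSign (x i)

theorem spin_eq_card_sub_two_mul_weight (x : ι → Bool) :
    spin x = Fintype.card ι - 2 * weight x := by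
  rw [spin, weight, card_filter, Nat.cast_sum, Finset.mul_sum, Fintype.card_eq_sum_ones,
    Nat.cast_sum, ← sum_sub_distrib]
  refine sum_congr rfl fun i _ => ?_
  cases x i <;> norm_num [zSign]

theorem spin_sq_le (x : ι → Bool) : spin x ^ 2 ≤ (Fintype.card ι : ℝ) ^ 2 := by
  have hw : (weight x : ℝ) ≤ Fintype.card ι := by exact_mod_cast card_filter_le _ _
  rw [spin_eq_card_sub_two_mul_weight]
  nlinarith [mul_nonneg (Nat.cast_nonneg (α := ℝ) (weight x)) (sub_nonneg.mpr hw)]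

theorem one_le_spin_sq (hodd : Odd (Fintype.card ι)) (x : ι → Bool) : 1 ≤ spin x ^ 2 := by
  have hne : (Fintype.card ι : ℤ) - 2 * weight x ≠ 0 := by
    obtain ⟨m, hm⟩ := hodd; omega
  have h : (1 : ℤ) ≤ ((Fintype.card ι : ℤ) - 2 * weight x) ^ 2 := by
    rw [one_le_sq_iff_one_le_abs]; exact Int.one_le_abs hne
  rw [spin_eq_card_sub_two_mul_weight]
  exact_mod_cast h

variable [DecidableEq ι]

theorem hammingDist_flipAt (x y : ι → Bool) (i : ι) :
    (hammingDist (flipAt x i) y : ℤ) = hammingDist x y + if x i = y i then 1 else -1 := by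
  simp only [hammingDist, card_filter]
  push_cast
  rw [← add_sum_erase _ _ (mem_univ i), ← add_sum_erase _ _ (mem_univ i)]
  have h : ∑ j ∈ univ.erase i, (if flipAt x i j ≠ y j then 1 else 0 : ℤ) =
      ∑ j ∈ univ.erase i, (if x j ≠ y j then 1 else 0 : ℤ) :=
    sum_congr rfl fun j hj => by rw [flipAt, Function.update_of_ne (ne_of_mem_erase hj)]
  rw [h, flipAt, Function.update_self]
  cases x i <;> cases y i <;> simp <;> ring

theorem weight_flipAt (x : ι → Bool) (i : ι) :
    (weight (flipAt x i) : ℤ) = weight x + if x i then -1 else 1 := by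
  have h : ∀ x : ι → Bool, weight x = hammingDist x (fun _ => false) := fun x => by
    simp [weight, hammingDist]
  rw [h, h, hammingDist_flipAt]
  cases x i <;> rfl

theorem hammingDist_eq_one_iff {x y : ι → Bool} :
    hammingDist x y = 1 ↔ ∃ i, flipAt x i = y := by
  constructor
  · intro h
    obtain ⟨i, hi⟩ := card_eq_one.mp h
    refine ⟨i, funext fun j => ?_⟩
    have hj := congrArg (j ∈ ·) hi
    simp only [mem_filter, mem_univ, true_and, mem_singleton, eq_iff_iff] at hj
    rcases eq_or_ne j i with rfl | hji
    · simp only [flipAt, Function.update_self]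
      cases hx : x j <;> cases hy : y j <;> simp_all
    · rw [flipAt, Function.update_of_ne hji]
      by_contra hxy
      exact hji (hj.mp hxy)
  · rintro ⟨i, rfl⟩
    have := hammingDist_flipAt x x i
    rw [hammingDist_self, if_pos rfl, hammingDist_comm] at this
    omega

theorem weight_add_weight_of_hammingDist_eq_one {x y : ι → Bool} (h : hammingDist x y = 1) :
    weight x + weight y = 2 * min (weight x) (weight y) + 1 := by
  obtain ⟨i, rfl⟩ := hammingDist_eq_one_iff.mp h
  have := weight_flipAt x i
  split_ifs at this <;> omega

def adj : Matrix (ι → Bool) (ι → Bool) ℝ := of fun x y => if hammingDist x y = 1 then 1 else 0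

theorem sum_adj_mul (x : ι → Bool) (f : (ι → Bool) → ℝ) :
    ∑ y, adj x y * f y = ∑ i, f (flipAt x i) := by
  have h : ({y | hammingDist x y = 1} : Finset (ι → Bool)) = univ.map ⟨_, flipAt_injective x⟩ := by
    ext y; simp [hammingDist_eq_one_iff]
  simp only [adj, of_apply, ite_mul, one_mul, zero_mul]
  rw [← sum_filter, h, sum_map]
  rfl

theorem adj_mul_adj_apply (x y : ι → Bool) :
    (adj * adj : Matrix (ι → Bool) (ι → Bool) ℝ) x y =
      if x = y then (Fintype.card ι : ℝ) else if hammingDist x y = 2 then 2 else 0 := by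
  have hterm : ∀ i, adj (flipAt x i) y =
      if x = y then 1 else if hammingDist x y = 2 then (if x i = y i then 0 else 1) else 0 := by
    intro i
    have h := hammingDist_flipAt x y i
    simp only [adj, of_apply]
    by_cases hxy : x = y
    · simp_all
    · have h0 : hammingDist x y ≠ 0 := hammingDist_ne_zero.mpr hxy
      split_ifs at h ⊢ <;> first | rfl | (exfalso; omega)
  rw [mul_apply, sum_adj_mul, sum_congr rfl fun i _ => hterm i]
  split_ifs with h1 h2
  · simp
  · rw [show (2 : ℝ) = hammingDist x y by rw [h2]; norm_num, hammingDist, card_filter,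
      Nat.cast_sum]
    exact sum_congr rfl fun i _ => by rw [ite_not]; push_cast; rfl
  · simp

/-- `∑ᵢ (Xᵢ - Zᵢ)`: `adj = ∑ᵢ Xᵢ` flips one bit and `spin x = ∑ᵢ Zᵢ` on the basis vector `x`. -/
def xMinusZ : Matrix (ι → Bool) (ι → Bool) ℝ := adj - diagonal spin

theorem xMinusZ_mul_self_apply (x y : ι → Bool) :
    (xMinusZ * xMinusZ : Matrix (ι → Bool) (ι → Bool) ℝ) x y =
      if x = y then Fintype.card ι + spin x ^ 2
      else if hammingDist x y = 1 then -(spin x + spin y)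
      else if hammingDist x y = 2 then 2 else 0 := by
  have h0 : hammingDist x y = 0 ↔ x = y := hammingDist_eq_zero
  simp only [xMinusZ, Matrix.sub_mul, Matrix.mul_sub, Matrix.sub_apply, adj_mul_adj_apply,
    mul_diagonal, diagonal_mul, diagonal_mul_diagonal, diagonal_apply]
  simp only [adj, of_apply]
  split_ifs <;> simp_all <;> ring

theorem xMinusZ_mul_kroneckerPow_rot :
    xMinusZ * kroneckerPow rot = kroneckerPow rot * diagonal fun z : ι → Bool => √2 * spin z := by
  ext x z
  rw [mul_diagonal, xMinusZ, Matrix.sub_mul, Matrix.sub_apply, diagonal_mul, mul_apply,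
    sum_adj_mul, spin, spin, Finset.sum_mul, Finset.mul_sum, Finset.mul_sum, ← sum_sub_distrib]
  refine sum_congr rfl fun i _ => ?_
  have hx := kroneckerPow_update_apply rot x z i (x i)
  rw [Function.update_eq_self] at hx
  rw [flipAt, kroneckerPow_update_apply, hx]
  linear_combination (∏ j ∈ univ.erase i, rot (x j) (z j)) * rot_not_sub_zSign_mul (x i) (z i)

theorem kroneckerPow_rot_mul_transpose :
    (kroneckerPow rot : Matrix (ι → Bool) (ι → Bool) ℝ) * (kroneckerPow rot)ᵀ = 1 := by
  rw [kroneckerPow_transpose, rot_transpose, kroneckerPow_mul, rot_mul_self, kroneckerPow_one]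

end Hypercube

open Hypercube

def bits (n j : ℕ) : Fin n → Bool := fun p => j.testBit p

theorem bits_injective (n : ℕ) : Function.Injective fun j : Fin (2 ^ n) => bits n j := by
  intro j k h
  refine Fin.ext (Nat.eq_of_testBit_eq fun p => ?_)
  rcases lt_or_ge p n with hp | hp
  · exact congrFun h ⟨p, hp⟩
  · have hlt : ∀ m : Fin (2 ^ n), (m : ℕ) < 2 ^ p := fun m =>
      m.isLt.trans_le (Nat.pow_le_pow_right two_pos hp)
    rw [Nat.testBit_eq_false_of_lt (hlt j), Nat.testBit_eq_false_of_lt (hlt k)]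

noncomputable def bitsEquiv (n : ℕ) : Fin (2 ^ n) ≃ (Fin n → Bool) :=
  Equiv.ofBijective _
    ((Fintype.bijective_iff_injective_and_card _).mpr ⟨bits_injective n, by simp⟩)

theorem bitsEquiv_apply (n : ℕ) (j : Fin (2 ^ n)) : bitsEquiv n j = bits n j :=
  rfl

theorem card_filter_range_eq_card_filter_fin (n : ℕ) (P : ℕ → Prop) [DecidablePred P] :
    #{p ∈ range n | P p} = #{p : Fin n | P p} := by
  rw [card_filter, card_filter, Fin.sum_univ_eq_sum_range (fun p => if P p then 1 else 0)]

theorem hamW_eq_weight (n j : ℕ) : hamW n j = weight (bits n j) :=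
  card_filter_range_eq_card_filter_fin n _

theorem hamD_eq_hammingDist (n j k : ℕ) : hamD n j k = hammingDist (bits n j) (bits n k) :=
  card_filter_range_eq_card_filter_fin n _

noncomputable def mConst (n : ℕ) : ℝ := (n - 1) * (1 - 1 / √2) + 2 * (1 - 1 / √2) ^ 2

noncomputable def mScale (n : ℕ) : ℝ := (1 - 1 / √2) ^ 2 / n

noncomputable def mCube (n : ℕ) : Matrix (Fin n → Bool) (Fin n → Bool) ℝ :=
  mConst n • 1 - mScale n • (xMinusZ * xMinusZ)

theorem mCube_apply {n : ℕ} (hn : n ≠ 0) (x y : Fin n → Bool) :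
    mCube n x y =
      if x = y then
        ((n : ℝ) - 1) * (1 - 1 / √2) +
          (1 / n) * ((n : ℝ) - (2 * (weight x : ℝ) - n) ^ 2) * (1 - 1 / √2) ^ 2
      else
        (2 / n) * (1 - 1 / √2) ^ 2 *
          ((if hammingDist x y = 1 then (n : ℝ) - 1 - 2 * (min (weight x) (weight y) : ℝ) else 0)
            - (if hammingDist x y = 2 then 1 else 0)) := by
  have hn' : (n : ℝ) ≠ 0 := Nat.cast_ne_zero.mpr hn
  simp only [mCube, mConst, mScale, Matrix.sub_apply, Matrix.smul_apply, one_apply,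
    xMinusZ_mul_self_apply, spin_eq_card_sub_two_mul_weight, Fintype.card_fin, smul_eq_mul]
  by_cases hxy : x = y
  · subst hxy
    simp only [if_true]
    field_simp
    ring
  · simp only [if_neg hxy]
    by_cases h1 : hammingDist x y = 1
    · have hw : (weight x : ℝ) + weight y = 2 * min (weight x : ℝ) (weight y) + 1 := by
        exact_mod_cast weight_add_weight_of_hammingDist_eq_one h1
      simp only [h1, if_true, show (1 : ℕ) ≠ 2 by norm_num, if_false]
      linear_combination (-2 * (1 - 1 / √2) ^ 2 / n) * hw
    · by_cases h2 : hammingDist x y = 2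
      · simp only [h2, if_true, if_false, OfNat.ofNat_ne_one]
        ring
      · simp only [h1, h2, if_false]
        ring

theorem Mmat_apply {n : ℕ} (hn : n ≠ 0) (j k : Fin (2 ^ n)) :
    Mmat n j k = mCube n (bitsEquiv n j) (bitsEquiv n k) := by
  simp only [mCube_apply hn, Mmat, bitsEquiv_apply, (bits_injective n).eq_iff, hamW_eq_weight,
    hamD_eq_hammingDist]

theorem one_sub_two_mul_one_sub_inv_sqrt_two : 1 - 2 * (1 - 1 / √2) = (1 - 1 / √2) * √2 := by
  have h : √2 ≠ 0 := by positivity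
  field_simp
  linear_combination (-1 : ℝ) * sq_sqrt (zero_le_two (α := ℝ))

theorem mConst_eq (n : ℕ) : mConst n = (1 - 1 / √2) ^ 2 * ((n - 1) * √2 + 2 * n) := by
  rw [mConst]
  linear_combination ((n : ℝ) - 1) * (1 - 1 / √2) * one_sub_two_mul_one_sub_inv_sqrt_two

theorem etaMin_eq {n : ℕ} (hn : n ≠ 0) : etaMin n = mConst n - mScale n * (√2 * n) ^ 2 := by
  have hn' : (n : ℝ) ≠ 0 := Nat.cast_ne_zero.mpr hn
  rw [etaMin, mConst_eq, mScale, mul_pow, sq_sqrt zero_le_two]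
  field_simp
  ring

theorem etaMax_eq_of_even {n : ℕ} (h : Even n) : etaMax n = mConst n := by
  rw [etaMax, if_pos h, mConst_eq]

theorem etaMax_eq_of_not_even {n : ℕ} (h : ¬Even n) : etaMax n = mConst n - mScale n * 2 := by
  rw [etaMax, if_neg h, mConst_eq, mScale]
  ring

theorem etaMin_le_mConst_sub {n : ℕ} (hn : n ≠ 0) (z : Fin n → Bool) :
    etaMin n ≤ mConst n - mScale n * (√2 * spin z) ^ 2 := by
  have hs := spin_sq_le z
  rw [Fintype.card_fin] at hs
  have hscale : 0 ≤ mScale n := by rw [mScale]; positivity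
  rw [etaMin_eq hn, mul_pow, mul_pow, sq_sqrt zero_le_two]
  nlinarith [mul_le_mul_of_nonneg_left hs hscale]

theorem mConst_sub_le_etaMax {n : ℕ} (z : Fin n → Bool) :
    mConst n - mScale n * (√2 * spin z) ^ 2 ≤ etaMax n := by
  have hscale : 0 ≤ mScale n := by rw [mScale]; positivity
  rw [mul_pow, sq_sqrt zero_le_two]
  by_cases h : Even n
  · rw [etaMax_eq_of_even h]
    nlinarith [sq_nonneg (spin z)]
  · have hs := one_le_spin_sq (by simpa [Nat.not_even_iff_odd] using h) z
    rw [etaMax_eq_of_not_even h]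
    nlinarith

theorem mCube_eq (n : ℕ) :
    mCube n = kroneckerPow rot * diagonal (fun z => mConst n - mScale n * (√2 * spin z) ^ 2) *
      (kroneckerPow rot)ᵀ :=
  smul_one_sub_smul_mul_self_eq_of_mul_eq_mul_diagonal kroneckerPow_rot_mul_transpose
    xMinusZ_mul_kroneckerPow_rot _ _

noncomputable def bitsRot (n : ℕ) : Matrix (Fin (2 ^ n)) (Fin n → Bool) ℝ :=
  (kroneckerPow rot).submatrix (bitsEquiv n) id

theorem bitsRot_mul_transpose (n : ℕ) : bitsRot n * (bitsRot n)ᵀ = 1 := by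
  rw [bitsRot, transpose_submatrix, ← submatrix_mul _ _ _ _ _ Function.bijective_id,
    kroneckerPow_rot_mul_transpose, submatrix_one_equiv]

theorem Mmat_eq {n : ℕ} (hn : n ≠ 0) :
    Mmat n = bitsRot n * diagonal (fun z : Fin n → Bool => mConst n - mScale n * (√2 * spin z) ^ 2) *
      (bitsRot n)ᵀ := by
  ext j k
  rw [Mmat_apply hn, mCube_eq]
  rfl

/-- For a unit vector `a ∈ ℂ^(2^n)`, the quadratic form
`c₂ = Σ_{j,k} conj(a_j) M_{jk} a_k` is real and lies in `[η_min(n), η_max(n)]`. -/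
theorem stmt7 (n : ℕ) (hn : 2 ≤ n) (a : Fin (2 ^ n) → ℂ)
    (ha : ∑ i : Fin (2 ^ n), ‖a i‖ ^ 2 = 1) :
    (∑ j : Fin (2 ^ n), ∑ k : Fin (2 ^ n),
        (starRingEnd ℂ) (a j) * ((Mmat n j k : ℝ) : ℂ) * a k).im = 0 ∧
    etaMin n ≤ (∑ j : Fin (2 ^ n), ∑ k : Fin (2 ^ n),
        (starRingEnd ℂ) (a j) * ((Mmat n j k : ℝ) : ℂ) * a k).re ∧
    (∑ j : Fin (2 ^ n), ∑ k : Fin (2 ^ n),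
        (starRingEnd ℂ) (a j) * ((Mmat n j k : ℝ) : ℂ) * a k).re ≤ etaMax n := by
  have hn0 : n ≠ 0 := by omega
  exact quadForm_bounds_of_eq_mul_diagonal_mul_transpose
    (bitsRot_mul_transpose n) (Mmat_eq hn0) (etaMin_le_mConst_sub hn0)
    mConst_sub_le_etaMax a ha
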